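/- arXiv:1203.6559 — 7 statements merged into one kernel-verified Lean document; each statement's English description precedes it below -/
import Mathlib

section
/- In the abstract Mahjong Solitaire model, if the layout consists only of isolated stacks of height one or two, and every group has exactly four tiles, then no blocked cycle is present. -/
/-- A board is a finite multiset of isolated stacks; each stack is a list of
tile groups, with the head of the list being the top tile of the stack. -/
abbrev Board (G : Type*) := Multiset (List G)

variable {G : Type*} [DecidableEq G]

/-- The number of tiles of group `g` remaining on the board. -/
def tileCount (B : Board G) (g : G) : ℕ := (B.map (fun s => s.count g)).sum

/-- The total number of tiles on the board. -/
def totalTiles (B : Board G) : ℕ := (B.map List.length).sum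

/-- The board obtained by removing the (playable) top tiles of stacks `s₁` and
`s₂`, the remaining stacks being `rest`; emptied stacks disappear. -/
def play (s₁ s₂ : List G) (rest : Board G) : Board G :=
  Multiset.filter (fun s => s ≠ []) (s₁.tail ::ₘ s₂.tail ::ₘ rest)

/-- A legal move: remove two playable (top) tiles of the same group. -/
def Move (B B' : Board G) : Prop :=
  ∃ (g : G) (s₁ s₂ : List G) (rest : Board G),
    B = s₁ ::ₘ s₂ ::ₘ rest ∧ s₁.head? = some g ∧ s₂.head? = some g ∧
    B' = play s₁ s₂ rest

/-- A board is solvable iff some sequence of legal moves empties it. -/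
def Solvable (B : Board G) : Prop := Relation.ReflTransGen Move B 0

/-- All stacks are nonempty and of height at most two. -/
def HeightsOK (B : Board G) : Prop := ∀ s ∈ B, s ≠ [] ∧ s.length ≤ 2

/-- A blocked cycle: distinct groups `p 0, …, p k`, each with exactly two
remaining tiles, such that for each `i` there is a height-two stack with a
`p (i+1)`-tile (cyclically) on top of a `p i`-tile. -/
def BlockedCycle (B : Board G) {k : ℕ} (p : Fin (k + 1) → G) : Prop :=
  Function.Injective p ∧ (∀ i, tileCount B (p i) = 2) ∧
    ∀ i, [p (i + 1), p i] ∈ B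

/-- The board contains some blocked cycle. -/
def HasBlockedCycle (B : Board G) : Prop :=
  ∃ (k : ℕ) (p : Fin (k + 1) → G), BlockedCycle B p

theorem stmt0_general (B : Board G)
    (h4 : ∀ g : G, tileCount B g ≠ 0 → tileCount B g = 4) :
    ¬ HasBlockedCycle B := by
  rintro ⟨k, p, -, hcount, -⟩
  simpa [hcount 0] using h4 (p 0)

/-- if the layout consists only of isolated stacks of height one
or two and every group (with tiles on the board) has exactly four tiles, then
no blocked cycle is present. -/
theorem stmt0 (B : Board G) (hH : HeightsOK B)
    (h4 : ∀ g : G, tileCount B g ≠ 0 → tileCount B g = 4) :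
    ¬ HasBlockedCycle B :=
  stmt0_general B h4
end

section
/- If a blocked cycle is present on a board consisting only of isolated stacks of heights one and two, then the board is unsolvable: no sequence of legal moves (each move removing two playable tiles of the same group) can remove all tiles. -/
variable {G : Type*} [DecidableEq G]

/-!
Each cycle group `p i` has exactly two tiles, one of which is buried under a `p (i+1)`-tile.
Playing `p i` would need two playable `p i`-tiles besides the buried one, i.e. three tiles, so
no move ever touches a cycle group. Hence every move preserves the blocked cycle, whereas the
empty board has none.
-/

lemma tileCount_cons (s : List G) (B : Board G) (g : G) :
    tileCount (s ::ₘ B) g = s.count g + tileCount B g := by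
  simp [tileCount]

lemma tileCount_filter_ne_nil (B : Board G) (g : G) :
    tileCount (B.filter (fun s => s ≠ [])) g = tileCount B g := by
  induction B using Multiset.induction with
  | empty => rfl
  | cons s B ih =>
    by_cases hs : s = [] <;> simp [hs, ih, tileCount_cons]

lemma count_le_tileCount {t : List G} {B : Board G} (ht : t ∈ B) (g : G) :
    t.count g ≤ tileCount B g := by
  obtain ⟨B', rfl⟩ := Multiset.exists_cons_of_mem ht
  simp [tileCount_cons]

lemma count_tail_of_head?_ne {s : List G} {g h : G} (hs : s.head? = some g) (hgh : g ≠ h) :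
    s.tail.count h = s.count h := by
  cases s with
  | nil => rfl
  | cons a s =>
    obtain rfl : a = g := by simpa using hs
    simp [hgh]

lemma tileCount_play_of_ne {s₁ s₂ : List G} {rest : Board G} {g h : G}
    (h₁ : s₁.head? = some g) (h₂ : s₂.head? = some g) (hgh : g ≠ h) :
    tileCount (play s₁ s₂ rest) h = tileCount (s₁ ::ₘ s₂ ::ₘ rest) h := by
  simp only [play, tileCount_filter_ne_nil, tileCount_cons, count_tail_of_head?_ne h₁ hgh,
    count_tail_of_head?_ne h₂ hgh]

lemma mem_play_of_head?_ne {α : Type*} {s₁ s₂ t : List α} {rest : Board α} {g : α}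
    (h₁ : s₁.head? = some g) (h₂ : s₂.head? = some g) (ht : t ∈ s₁ ::ₘ s₂ ::ₘ rest)
    (htg : t.head? ≠ some g) (hne : t ≠ []) : t ∈ play s₁ s₂ rest := by
  have ht_rest : t ∈ rest := by
    rcases Multiset.mem_cons.1 ht with rfl | ht
    · exact absurd h₁ htg
    rcases Multiset.mem_cons.1 ht with rfl | ht
    · exact absurd h₂ htg
    exact ht
  exact Multiset.mem_filter.2
    ⟨Multiset.mem_cons_of_mem (Multiset.mem_cons_of_mem ht_rest), hne⟩

lemma one_add_count_tail_le_count {s : List G} {g : G} (hs : s.head? = some g) :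
    1 + s.tail.count g ≤ s.count g := by
  cases s with
  | nil => simp at hs
  | cons a s =>
    obtain rfl : a = g := by simpa using hs
    simp [Nat.add_comm]

lemma three_le_tileCount_of_mem_tail {s₁ s₂ t : List G} {rest : Board G} {g : G}
    (h₁ : s₁.head? = some g) (h₂ : s₂.head? = some g) (ht : t ∈ s₁ ::ₘ s₂ ::ₘ rest)
    (hg : g ∈ t.tail) : 3 ≤ tileCount (s₁ ::ₘ s₂ ::ₘ rest) g := by
  have hcount₁ := one_add_count_tail_le_count h₁
  have hcount₂ := one_add_count_tail_le_count h₂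
  have htail : 1 ≤ t.tail.count g := List.count_pos_iff.2 hg
  rw [tileCount_cons, tileCount_cons]
  rcases Multiset.mem_cons.1 ht with rfl | ht
  · omega
  rcases Multiset.mem_cons.1 ht with rfl | ht
  · omega
  have := count_le_tileCount ht g
  have := (List.tail_sublist t).count_le g
  omega

namespace BlockedCycle

variable {k : ℕ} {p : Fin (k + 1) → G}

lemma move {B B' : Board G} (hc : BlockedCycle B p) (hm : Move B B') : BlockedCycle B' p := by
  obtain ⟨hinj, hcount, hmem⟩ := hc
  obtain ⟨g, s₁, s₂, rest, rfl, h₁, h₂, rfl⟩ := hm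
  have hg : ∀ j, g ≠ p j := by
    rintro j rfl
    have := three_le_tileCount_of_mem_tail h₁ h₂ (hmem j) (by simp)
    have := hcount j
    omega
  refine ⟨hinj, fun i => (tileCount_play_of_ne h₁ h₂ (hg i)).trans (hcount i), fun i => ?_⟩
  refine mem_play_of_head?_ne h₁ h₂ (hmem i) ?_ (List.cons_ne_nil _ _)
  simpa using (hg (i + 1)).symm

lemma reflTransGen_move {B B' : Board G} (hc : BlockedCycle B p)
    (hB : Relation.ReflTransGen Move B B') : BlockedCycle B' p := by
  induction hB with
  | refl => exact hc
  | tail _ hm ih => exact ih.move hm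

lemma ne_zero {B : Board G} (hc : BlockedCycle B p) : B ≠ 0 := by
  rintro rfl
  simpa [tileCount] using hc.2.1 0

end BlockedCycle

theorem stmt1_general (B : Board G)
    (hc : HasBlockedCycle B) : ¬ Solvable B := by
  obtain ⟨k, p, hc⟩ := hc
  exact fun hs => (hc.reflTransGen_move hs).ne_zero rfl

/-- a board of isolated stacks of heights one and two containing a
blocked cycle is unsolvable. -/
theorem stmt1 (B : Board G) (hH : HeightsOK B)
    (hc : HasBlockedCycle B) : ¬ Solvable B :=
  stmt1_general B hc
end

section
/- On a nonempty board of isolated stacks of heights one and two where every group has two or four tiles, if no match is available (no two playable tiles share a group), then every stack has height exactly two and every group has exactly two tiles. -/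
variable {G : Type*} [DecidableEq G]

/- With no match available, the top tiles of the stacks belong to pairwise distinct groups, and
each of these groups has at least two tiles. Counting with multiplicity, twice the multiset of
top groups is therefore a sub-multiset of the multiset of all tiles. The former has `2 · #stacks`
elements, the latter at most `2 · #stacks` since stacks have height at most two; so the two are
equal. Hence every stack has height two, and every group occurring on the board is the group of
exactly one top tile and has exactly two tiles. -/

theorem Multiset.exists_eq_cons_cons_of_two_le_card {α : Type*} {s : Multiset α}
    (h : 2 ≤ Multiset.card s) : ∃ a b t, s = a ::ₘ b ::ₘ t := by
  induction s using Quotient.inductionOn with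
  | h l =>
    rcases l with _ | ⟨a, _ | ⟨b, t⟩⟩
    · simp at h
    · simp at h
    · exact ⟨a, b, t, rfl⟩

namespace Board

variable {G : Type*}

def tiles (B : Board G) : Multiset G := B.bind (↑)

def tops (B : Board G) : Multiset G := B.filterMap List.head?

def HasMatch (B : Board G) : Prop :=
  ∃ (g : G) (s₁ s₂ : List G) (rest : Board G),
    B = s₁ ::ₘ s₂ ::ₘ rest ∧ s₁.head? = some g ∧ s₂.head? = some g

theorem tileCount_eq_count_tiles [DecidableEq G] (B : Board G) (g : G) :
    tileCount B g = (tiles B).count g := by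
  simp [tileCount, tiles, Multiset.count_bind]

theorem totalTiles_eq_card_tiles (B : Board G) : totalTiles B = Multiset.card (tiles B) := by
  simp [totalTiles, tiles, Multiset.card_bind, Function.comp_def]

theorem card_tops {B : Board G} (hB : ∀ s ∈ B, s ≠ []) :
    Multiset.card (tops B) = Multiset.card B := by
  induction B using Multiset.induction_on with
  | empty => rfl
  | cons s B ih =>
    obtain ⟨a, l, rfl⟩ := List.exists_cons_of_ne_nil (hB s (Multiset.mem_cons_self s B))
    have ih := ih fun t ht => hB t (Multiset.mem_cons_of_mem ht)
    simp [tops, Multiset.filterMap_cons_some, ← ih]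

theorem count_tops [DecidableEq G] (B : Board G) (g : G) :
    (tops B).count g = Multiset.card (B.filter (·.head? = some g)) := by
  induction B using Multiset.induction_on with
  | empty => rfl
  | cons s B ih =>
    unfold tops at ih ⊢
    rcases s with _ | ⟨a, l⟩
    · rw [Multiset.filterMap_cons_none _ _ rfl, Multiset.filter_cons_of_neg _ (by simp), ih]
    · rw [Multiset.filterMap_cons_some List.head? _ _ rfl, Multiset.count_cons, ih]
      by_cases hag : a = g
      · rw [Multiset.filter_cons_of_pos _ (by simp [hag]), Multiset.card_cons, if_pos hag.symm]
      · rw [Multiset.filter_cons_of_neg _ (by simp [hag]), if_neg (Ne.symm hag), add_zero]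

theorem mem_tiles_of_mem_tops {B : Board G} {g : G} (h : g ∈ tops B) : g ∈ tiles B := by
  obtain ⟨s, hs, hg⟩ := (Multiset.mem_filterMap _ _).1 h
  exact Multiset.mem_bind.2 ⟨s, hs, List.mem_of_mem_head? hg⟩

theorem count_tops_le_one [DecidableEq G] {B : Board G} (hB : ¬ HasMatch B) (g : G) :
    (tops B).count g ≤ 1 := by
  by_contra! h
  obtain ⟨s₁, s₂, t, ht⟩ := Multiset.exists_eq_cons_cons_of_two_le_card
    (count_tops B g ▸ h : 2 ≤ Multiset.card (B.filter (·.head? = some g)))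
  have hs₁ : s₁ ∈ B.filter (·.head? = some g) := ht ▸ Multiset.mem_cons_self _ _
  have hs₂ : s₂ ∈ B.filter (·.head? = some g) :=
    ht ▸ Multiset.mem_cons_of_mem (Multiset.mem_cons_self _ _)
  refine hB ⟨g, s₁, s₂, t + B.filter (¬ ·.head? = some g), ?_,
    (Multiset.mem_filter.1 hs₁).2, (Multiset.mem_filter.1 hs₂).2⟩
  rw [← Multiset.cons_add, ← Multiset.cons_add, ← ht, Multiset.filter_add_not]

theorem two_nsmul_tops_le_tiles [DecidableEq G] {B : Board G} (hB : ¬ HasMatch B)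
    (hB₁ : ∀ g, tileCount B g ≠ 1) :
    2 • tops B ≤ tiles B := by
  refine Multiset.le_iff_count.2 fun g => ?_
  rw [Multiset.count_nsmul]
  rcases Nat.eq_zero_or_pos ((tops B).count g) with h | h
  · simp [h]
  · have hg : 0 < (tiles B).count g :=
      Multiset.count_pos.2 (mem_tiles_of_mem_tops (Multiset.count_pos.1 h))
    have := hB₁ g
    have := count_tops_le_one hB g
    rw [tileCount_eq_count_tiles] at *
    omega

theorem totalTiles_le {B : Board G} {k : ℕ} (hB : ∀ s ∈ B, s.length ≤ k) :
    totalTiles B ≤ k * Multiset.card B := by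
  simpa [totalTiles, mul_comm] using
    Multiset.sum_le_card_nsmul (B.map List.length) k (by simpa using hB)

theorem length_eq_of_totalTiles_eq {B : Board G} {k : ℕ} (hB : ∀ s ∈ B, s.length ≤ k)
    (he : totalTiles B = k * Multiset.card B) : ∀ s ∈ B, s.length = k := by
  by_contra! ⟨s, hs, hlt⟩
  have : totalTiles B < (B.map fun _ => k).sum :=
    Multiset.sum_lt_sum (fun t ht => hB t ht) ⟨s, hs, lt_of_le_of_ne (hB s hs) hlt⟩
  simp [he, mul_comm] at this

end Board

open Board in
theorem stmt4_general (B : Board G) (hH : HeightsOK B)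
    (hs : ∀ g : G, tileCount B g = 0 ∨ tileCount B g = 2 ∨ tileCount B g = 4)
    (hnm : ¬ ∃ (g : G) (s₁ s₂ : List G) (rest : Board G),
      B = s₁ ::ₘ s₂ ::ₘ rest ∧ s₁.head? = some g ∧ s₂.head? = some g) :
    (∀ s ∈ B, s.length = 2) ∧
    (∀ g : G, tileCount B g ≠ 0 → tileCount B g = 2) := by
  have hlen : ∀ s ∈ B, s.length ≤ 2 := fun s hs => (hH s hs).2
  have htops : Multiset.card (tops B) = Multiset.card B := card_tops fun s hs => (hH s hs).1
  have hle : 2 • tops B ≤ tiles B :=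
    two_nsmul_tops_le_tiles hnm fun g => by rcases hs g with h | h | h <;> omega
  have hcard : Multiset.card (tiles B) ≤ Multiset.card (2 • tops B) := by
    rw [← totalTiles_eq_card_tiles, Multiset.card_nsmul, htops]
    exact totalTiles_le hlen
  have heq : 2 • tops B = tiles B := Multiset.eq_of_le_of_card_le hle hcard
  refine ⟨length_eq_of_totalTiles_eq hlen ?_, fun g hg => ?_⟩
  · rw [totalTiles_eq_card_tiles, ← heq, Multiset.card_nsmul, htops]
  · have hcount : tileCount B g = 2 * (tops B).count g := by
      rw [tileCount_eq_count_tiles, ← heq, Multiset.count_nsmul]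
    have := count_tops_le_one hnm g
    omega

/-- on a nonempty board of stacks of heights one and two with all
groups of size two or four, if no match is available then every stack has
height exactly two and every present group has exactly two tiles. -/
theorem stmt4 (B : Board G) (hne : B ≠ 0) (hH : HeightsOK B)
    (hs : ∀ g : G, tileCount B g = 0 ∨ tileCount B g = 2 ∨ tileCount B g = 4)
    (hnm : ¬ ∃ (g : G) (s₁ s₂ : List G) (rest : Board G),
      B = s₁ ::ₘ s₂ ::ₘ rest ∧ s₁.head? = some g ∧ s₂.head? = some g) :
    (∀ s ∈ B, s.length = 2) ∧
    (∀ g : G, tileCount B g ≠ 0 → tileCount B g = 2) :=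
  stmt4_general B hH hs hnm
end

section
/- On a nonempty board where every stack has height exactly two and every group has exactly two tiles, if no match exists (no group has both tiles playable), then the set of stacks decomposes into disjoint blocked cycles: the function sending each group to the group of the tile lying above its bottom tile is a well-defined permutation of the groups, and every group lies on a cycle of this permutation, each cycle being a blocked cycle. -/
variable {G : Type*} [DecidableEq G]

/-! Without a match every group tops at most one stack, and a group lying on top has its
other tile at a bottom; so the multiset of top tiles is contained in the multiset of bottom
tiles, and since both have one entry per stack they are equal. Hence every group on the board
is the top of exactly one stack and the bottom of exactly one stack: "the group above `g`" is
an injective self-map of the finite set of groups on the board, and the orbit of each group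
under it is a blocked cycle. -/

theorem Multiset.exists_eq_cons_cons_of_not_nodup_map {α β : Type*} {f : α → β}
    {s : Multiset α} (h : ¬ (s.map f).Nodup) :
    ∃ a b t, s = a ::ₘ b ::ₘ t ∧ f a = f b := by
  classical
  obtain ⟨c, t, hst⟩ : ∃ c t, s.map f = c ::ₘ c ::ₘ t := by
    simpa [Multiset.nodup_iff_ne_cons_cons] using h
  obtain ⟨a, ha, rfl, hat⟩ := (Multiset.map_eq_cons f s _ c).mpr hst
  obtain ⟨b, hb, hba, -⟩ := (Multiset.map_eq_cons f _ t _).mpr hat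
  exact ⟨a, b, (s.erase a).erase b, by rw [Multiset.cons_erase hb, Multiset.cons_erase ha],
    hba.symm⟩

theorem Function.Injective.exists_cycle {α : Type*} [Finite α] {f : α → α}
    (hf : Function.Injective f) (x : α) :
    ∃ (k : ℕ) (p : Fin (k + 1) → α),
      Function.Injective p ∧ (∀ i, p (i + 1) = f (p i)) ∧ p 0 = x := by
  obtain ⟨k, hk⟩ : ∃ k, Function.minimalPeriod f x = k + 1 :=
    Nat.exists_eq_add_one.mpr
      (Function.minimalPeriod_pos_of_mem_periodicPts (hf.mem_periodicPts x))
  refine ⟨k, fun i => f^[i] x, fun i j hij => Fin.ext ?_, fun i => ?_, rfl⟩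
  · exact Function.iterate_injOn_Iio_minimalPeriod (by simp [hk, i.is_le]) (by simp [hk, j.is_le])
      hij
  · show f^[((i + 1 : Fin (k + 1)) : ℕ)] x = f (f^[i] x)
    have hmod := Function.iterate_mod_minimalPeriod_eq (f := f) (x := x) (n := i + 1)
    rw [hk] at hmod
    rw [Fin.val_add, Fin.val_one', Nat.add_mod_mod, hmod, Function.iterate_succ_apply']

section Board

variable {B : Board G}

def HasMatch (B : Board G) : Prop :=
  ∃ (g : G) (s₁ s₂ : List G) (rest : Board G),
    B = s₁ ::ₘ s₂ ::ₘ rest ∧ s₁.head? = some g ∧ s₂.head? = some g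

theorem tileCount_ne_zero_iff {g : G} : tileCount B g ≠ 0 ↔ ∃ s ∈ B, g ∈ s := by
  simp [tileCount, Multiset.sum_eq_zero_iff, List.count_eq_zero]

theorem setOf_tileCount_ne_zero_finite (B : Board G) : {g | tileCount B g ≠ 0}.Finite :=
  Set.Finite.ofFinset (B.toFinset.biUnion List.toFinset) fun g => by
    simp [tileCount_ne_zero_iff]

theorem tileCount_eq_count_head?_add_count_getLast? (hH2 : ∀ s ∈ B, s.length = 2) (g : G) :
    tileCount B g =
      (B.map List.head?).count (some g) + (B.map List.getLast?).count (some g) := by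
  induction B using Multiset.induction_on with
  | empty => simp [tileCount]
  | cons s B ih =>
    obtain ⟨a, b, rfl⟩ := List.length_eq_two.mp (hH2 s (Multiset.mem_cons_self _ _))
    have := ih fun t ht => hH2 t (Multiset.mem_cons_of_mem ht)
    simp only [tileCount, Multiset.map_cons, Multiset.sum_cons, Multiset.count_cons] at this ⊢
    simp only [List.count_cons, List.count_nil, beq_iff_eq, this, List.head?_cons,
      List.getLast?_cons_cons, List.getLast?_singleton, Option.some.injEq, eq_comm (a := g)]
    omega

theorem nodup_map_head?_of_not_hasMatch (hB : [] ∉ B) (hnm : ¬ HasMatch B) :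
    (B.map List.head?).Nodup := by
  by_contra h
  obtain ⟨_ | ⟨g, s₁⟩, s₂, rest, rfl, h12⟩ :=
    Multiset.exists_eq_cons_cons_of_not_nodup_map h
  · exact hB (Multiset.mem_cons_self _ _)
  · exact hnm ⟨g, _, s₂, rest, rfl, rfl, h12.symm⟩

theorem eq_of_mem_of_mem_of_not_hasMatch (hnm : ¬ HasMatch B) {g' g₁ g₂ : G}
    (h₁ : [g', g₁] ∈ B) (h₂ : [g', g₂] ∈ B) : g₁ = g₂ := by
  by_contra hne
  have h₂' : [g', g₂] ∈ B.erase [g', g₁] :=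
    (Multiset.mem_erase_of_ne (by simp [Ne.symm hne])).mpr h₂
  exact hnm ⟨g', _, _, _, by rw [Multiset.cons_erase h₂', Multiset.cons_erase h₁], rfl, rfl⟩

section HeightTwo

variable (hH2 : ∀ s ∈ B, s.length = 2)
  (h2 : ∀ g : G, tileCount B g ≠ 0 → tileCount B g = 2) (hnm : ¬ HasMatch B)
include hH2 h2 hnm

theorem map_head?_eq_map_getLast? : B.map List.head? = B.map List.getLast? := by
  have hnil : [] ∉ B := fun h => by simpa using hH2 [] h
  have hnd := Multiset.nodup_iff_count_le_one.mp (nodup_map_head?_of_not_hasMatch hnil hnm)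
  refine Multiset.eq_of_le_of_card_le (Multiset.le_iff_count.mpr fun o => ?_) (by simp)
  rcases o with _ | g
  · have : none ∉ B.map List.head? := by
      simp only [Multiset.mem_map, List.head?_eq_none_iff, not_exists, not_and]
      exact fun s hs hs0 => hnil (hs0 ▸ hs)
    simp [Multiset.count_eq_zero.mpr this]
  · have := tileCount_eq_count_head?_add_count_getLast? hH2 g
    have := hnd (some g)
    by_cases h0 : tileCount B g = 0
    · omega
    · have := h2 g h0; omega

theorem nodup_map_getLast? : (B.map List.getLast?).Nodup :=
  map_head?_eq_map_getLast? hH2 h2 hnm ▸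
    nodup_map_head?_of_not_hasMatch (fun h => by simpa using hH2 [] h) hnm

theorem existsUnique_mem_of_tileCount_ne_zero {g : G} (hg : tileCount B g ≠ 0) :
    ∃! g', [g', g] ∈ B := by
  have hshape s (hs : s ∈ B) : ∃ a b, s = [a, b] := List.length_eq_two.mp (hH2 s hs)
  have hbottom : some g ∈ B.map List.getLast? := by
    obtain ⟨s, hs, hgs⟩ := tileCount_ne_zero_iff.mp hg
    obtain ⟨a, b, rfl⟩ := hshape s hs
    rcases List.mem_pair.mp hgs with rfl | rfl
    · exact map_head?_eq_map_getLast? hH2 h2 hnm ▸ Multiset.mem_map_of_mem _ hs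
    · exact Multiset.mem_map_of_mem _ hs
  obtain ⟨s, hs, hsg⟩ := Multiset.mem_map.mp hbottom
  obtain ⟨a, b, rfl⟩ := hshape s hs
  obtain rfl : b = g := by simpa using hsg
  exact ⟨a, hs, fun c hc => by
    simpa using Multiset.inj_on_of_nodup_map (nodup_map_getLast? hH2 h2 hnm) _ hc _ hs rfl⟩

theorem exists_blockedCycle_mem {g : G} (hg : tileCount B g ≠ 0) :
    ∃ (k : ℕ) (p : Fin (k + 1) → G), BlockedCycle B p ∧ ∃ i, p i = g := by
  choose above habove using fun x (hx : tileCount B x ≠ 0) =>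
    (existsUnique_mem_of_tileCount_ne_zero hH2 h2 hnm hx).exists
  have : Finite {x // tileCount B x ≠ 0} := (setOf_tileCount_ne_zero_finite B).to_subtype
  let σ (x : {x // tileCount B x ≠ 0}) : {x // tileCount B x ≠ 0} :=
    ⟨above x x.2, tileCount_ne_zero_iff.mpr ⟨_, habove x x.2, by simp⟩⟩
  have hσ : Function.Injective σ := fun x y hxy => by
    have hxy' : above x x.2 = above y y.2 := congrArg Subtype.val hxy
    exact Subtype.ext
      (eq_of_mem_of_mem_of_not_hasMatch hnm (habove x x.2) (hxy' ▸ habove y y.2))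
  obtain ⟨k, p, hp, hstep, hp0⟩ := hσ.exists_cycle ⟨g, hg⟩
  refine ⟨k, Subtype.val ∘ p, ⟨Subtype.val_injective.comp hp, fun i => h2 _ (p i).2,
    fun i => ?_⟩, 0, by simp [hp0]⟩
  simpa [hstep] using habove _ (p i).2

end HeightTwo

end Board

theorem stmt7_general (B : Board G)
    (hH2 : ∀ s ∈ B, s.length = 2)
    (h2 : ∀ g : G, tileCount B g ≠ 0 → tileCount B g = 2)
    (hnm : ¬ ∃ (g : G) (s₁ s₂ : List G) (rest : Board G),
      B = s₁ ::ₘ s₂ ::ₘ rest ∧ s₁.head? = some g ∧ s₂.head? = some g) :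
    (∀ g : G, tileCount B g ≠ 0 → ∃! g' : G, [g', g] ∈ B) ∧
    (∀ g₁ g₂ g' : G, [g', g₁] ∈ B → [g', g₂] ∈ B → g₁ = g₂) ∧
    (∀ g : G, tileCount B g ≠ 0 →
      ∃ (k : ℕ) (p : Fin (k + 1) → G), BlockedCycle B p ∧ ∃ i, p i = g) :=
  ⟨fun _ => existsUnique_mem_of_tileCount_ne_zero hH2 h2 hnm,
    fun _ _ _ => eq_of_mem_of_mem_of_not_hasMatch hnm,
    fun _ => exists_blockedCycle_mem hH2 h2 hnm⟩

/-- on a nonempty matchless board of height-two stacks with all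
groups of size two, the map sending each group to the group lying above its
bottom tile is a well-defined injective map, and every group lies on a blocked
cycle. -/
theorem stmt7 (B : Board G) (hne : B ≠ 0)
    (hH2 : ∀ s ∈ B, s.length = 2)
    (h2 : ∀ g : G, tileCount B g ≠ 0 → tileCount B g = 2)
    (hnm : ¬ ∃ (g : G) (s₁ s₂ : List G) (rest : Board G),
      B = s₁ ::ₘ s₂ ::ₘ rest ∧ s₁.head? = some g ∧ s₂.head? = some g) :
    (∀ g : G, tileCount B g ≠ 0 → ∃! g' : G, [g', g] ∈ B) ∧
    (∀ g₁ g₂ g' : G, [g', g₁] ∈ B → [g', g₂] ∈ B → g₁ = g₂) ∧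
    (∀ g : G, tileCount B g ≠ 0 →
      ∃ (k : ℕ) (p : Fin (k + 1) → G), BlockedCycle B p ∧ ∃ i, p i = g) :=
  stmt7_general B hH2 h2 hnm
end

section
/- Moves of different groups commute: if on a board B two matches m1 (of group g1) and m2 (of group g2) with g1 ≠ g2 are both playable, then m2 is still playable after playing m1, m1 is still playable after playing m2, and playing them in either order yields the same board. -/
variable {G : Type*} [DecidableEq G]

omit [DecidableEq G] in
lemma play_eq_filter_add (s₁ s₂ : List G) (rest : Board G) :
    play s₁ s₂ rest = (s₁.tail ::ₘ s₂.tail ::ₘ 0 + rest).filter (· ≠ []) := by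
  rw [play, Multiset.cons_add, Multiset.cons_add, zero_add]

omit [DecidableEq G] in
lemma play_cons_of_ne_nil {a : List G} (s₁ s₂ : List G) (rest : Board G) (ha : a ≠ []) :
    play s₁ s₂ (a ::ₘ rest) = a ::ₘ play s₁ s₂ rest := by
  rw [play_eq_filter_add, play_eq_filter_add, Multiset.add_cons,
    Multiset.filter_cons_of_pos (p := (· ≠ [])) _ ha]

omit [DecidableEq G] in
lemma play_comm (s₁ s₂ t₁ t₂ : List G) (rest : Board G) :
    play t₁ t₂ (play s₁ s₂ rest) = play s₁ s₂ (play t₁ t₂ rest) := by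
  rw [play_eq_filter_add t₁ t₂, play_eq_filter_add s₁ s₂ rest, play_eq_filter_add s₁ s₂,
    play_eq_filter_add t₁ t₂ rest]
  simp only [Multiset.filter_add, Multiset.filter_filter, and_self]
  abel

lemma List.ne_nil_of_head?_eq_some {α : Type*} {l : List α} {a : α} (h : l.head? = some a) :
    l ≠ [] := by
  rintro rfl
  simp at h

theorem stmt11_general (g₁ g₂ : G)
    (s₁ s₂ t₁ t₂ : List G) (rest : Board G)
    (hs₁ : s₁.head? = some g₁) (hs₂ : s₂.head? = some g₁)
    (ht₁ : t₁.head? = some g₂) (ht₂ : t₂.head? = some g₂) :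
    (∃ r : Board G, play s₁ s₂ (t₁ ::ₘ t₂ ::ₘ rest) = t₁ ::ₘ t₂ ::ₘ r) ∧
    (∃ r' : Board G, play t₁ t₂ (s₁ ::ₘ s₂ ::ₘ rest) = s₁ ::ₘ s₂ ::ₘ r') ∧
    (∀ r r' : Board G, play s₁ s₂ (t₁ ::ₘ t₂ ::ₘ rest) = t₁ ::ₘ t₂ ::ₘ r →
      play t₁ t₂ (s₁ ::ₘ s₂ ::ₘ rest) = s₁ ::ₘ s₂ ::ₘ r' →
      play t₁ t₂ r = play s₁ s₂ r') := by
  have hs : play s₁ s₂ (t₁ ::ₘ t₂ ::ₘ rest) = t₁ ::ₘ t₂ ::ₘ play s₁ s₂ rest := by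
    rw [play_cons_of_ne_nil _ _ _ (List.ne_nil_of_head?_eq_some ht₁),
      play_cons_of_ne_nil _ _ _ (List.ne_nil_of_head?_eq_some ht₂)]
  have ht : play t₁ t₂ (s₁ ::ₘ s₂ ::ₘ rest) = s₁ ::ₘ s₂ ::ₘ play t₁ t₂ rest := by
    rw [play_cons_of_ne_nil _ _ _ (List.ne_nil_of_head?_eq_some hs₁),
      play_cons_of_ne_nil _ _ _ (List.ne_nil_of_head?_eq_some hs₂)]
  refine ⟨⟨_, hs⟩, ⟨_, ht⟩, fun r r' hr hr' => ?_⟩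
  obtain rfl : r = play s₁ s₂ rest := by simpa [hs] using hr.symm
  obtain rfl : r' = play t₁ t₂ rest := by simpa [ht] using hr'.symm
  exact play_comm s₁ s₂ t₁ t₂ rest

/-- matches of different groups commute: after playing the
`g₁`-match, the `g₂`-match is still playable (and vice versa), and playing the
two matches in either order yields the same board. -/
theorem stmt11 (B : Board G) (hH : HeightsOK B) (g₁ g₂ : G) (hne : g₁ ≠ g₂)
    (s₁ s₂ t₁ t₂ : List G) (rest : Board G)
    (hB : B = s₁ ::ₘ s₂ ::ₘ t₁ ::ₘ t₂ ::ₘ rest)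
    (hs₁ : s₁.head? = some g₁) (hs₂ : s₂.head? = some g₁)
    (ht₁ : t₁.head? = some g₂) (ht₂ : t₂.head? = some g₂) :
    (∃ r : Board G, play s₁ s₂ (t₁ ::ₘ t₂ ::ₘ rest) = t₁ ::ₘ t₂ ::ₘ r) ∧
    (∃ r' : Board G, play t₁ t₂ (s₁ ::ₘ s₂ ::ₘ rest) = s₁ ::ₘ s₂ ::ₘ r') ∧
    (∀ r r' : Board G, play s₁ s₂ (t₁ ::ₘ t₂ ::ₘ rest) = t₁ ::ₘ t₂ ::ₘ r →
      play t₁ t₂ (s₁ ::ₘ s₂ ::ₘ rest) = s₁ ::ₘ s₂ ::ₘ r' →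
      play t₁ t₂ r = play s₁ s₂ r') :=
  stmt11_general g₁ g₂ s₁ s₂ t₁ t₂ rest hs₁ hs₂ ht₁ ht₂
end

section
/- Cleaning soundness for full groups: if all remaining tiles of a group g (two or four of them) are simultaneously playable on board B, then B is solvable if and only if the board obtained by removing all tiles of g (by playing them in matches of g) is solvable. -/
variable {G : Type*} [DecidableEq G]

/-!
Every `g`-tile is playable and no stack holds two of them, so the `g`-tiles neither block nor are
blocked by any other tile. Erasing them turns a solution of `B` into a solution of the cleaned
board: a `g`-move becomes a no-op and every other move stays legal. Conversely, since the number
of `g`-tiles is even and positive, playing them in pairs first leads from `B` to the cleaned board.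
-/

theorem List.head?_eq_some_of_mem_of_not_mem_tail {α : Type*} {a : α} {l : List α}
    (h : a ∈ l) (ht : a ∉ l.tail) : l.head? = some a := by
  cases l with
  | nil => simp at h
  | cons b l => simp_all [eq_comm]

namespace Board

/-- No `g`-tile lies below the top of a stack: every `g`-tile is playable, and no stack holds two. -/
def AllPlayable {α : Type*} (B : Board α) (g : α) : Prop := ∀ s ∈ B, g ∉ s.tail

theorem allPlayable_cons {α : Type*} {s : List α} {B : Board α} {g : α} :
    AllPlayable (s ::ₘ B) g ↔ g ∉ s.tail ∧ AllPlayable B g :=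
  Multiset.forall_mem_cons

def cleanStack (g : G) (s : List G) : List G := if s.head? = some g then s.tail else s

def clean (g : G) (B : Board G) : Board G := (B.map (cleanStack g)).filter (fun s => s ≠ [])

theorem cleanStack_cons_self (g : G) (t : List G) : cleanStack g (g :: t) = t := if_pos rfl

theorem cleanStack_of_not_mem {g : G} {s : List G} (h : g ∉ s) : cleanStack g s = s :=
  if_neg fun hs => h (List.mem_of_mem_head? hs)

theorem tileCount_cons (s : List G) (B : Board G) (g : G) :
    tileCount (s ::ₘ B) g = s.count g + tileCount B g := by
  simp [tileCount]

theorem tileCount_eq_zero {B : Board G} {g : G} : tileCount B g = 0 ↔ ∀ s ∈ B, g ∉ s := by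
  simp [tileCount, Multiset.sum_eq_zero_iff, List.count_eq_zero]

theorem tileCount_filter_ne_nil (B : Board G) (g : G) :
    tileCount (B.filter (fun s => s ≠ [])) g = tileCount B g := by
  induction B using Multiset.induction_on with
  | empty => rfl
  | cons s B ih => by_cases hs : s = [] <;> simp [hs, tileCount_cons, ih]

theorem play_filter_ne_nil {α : Type*} (s₁ s₂ : List α) (rest : Board α) :
    play s₁ s₂ (rest.filter (fun s => s ≠ [])) = play s₁ s₂ rest := by
  simp [play, Multiset.filter_cons]

theorem clean_filter_ne_nil (g : G) (B : Board G) :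
    clean g (B.filter (fun s => s ≠ [])) = clean g B := by
  induction B using Multiset.induction_on with
  | empty => rfl
  | cons s B ih =>
    by_cases hs : s = []
    · simp_all [clean, cleanStack]
    · simp_all [clean, Multiset.filter_cons]

theorem clean_eq_filter_of_tileCount_eq_zero {B : Board G} {g : G} (h : tileCount B g = 0) :
    clean g B = B.filter (fun s => s ≠ []) := by
  rw [clean, Multiset.map_congr rfl fun s hs => cleanStack_of_not_mem (tileCount_eq_zero.mp h s hs),
    Multiset.map_id']

theorem AllPlayable.play {α : Type*} {s₁ s₂ : List α} {rest : Board α} {g : α}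
    (hB : AllPlayable (s₁ ::ₘ s₂ ::ₘ rest) g) : AllPlayable (play s₁ s₂ rest) g := by
  simp only [allPlayable_cons] at hB
  intro s hs
  simp only [_root_.play, Multiset.mem_filter, Multiset.mem_cons] at hs
  rcases hs.1 with rfl | rfl | hs
  · exact fun h => hB.1 (List.mem_of_mem_tail h)
  · exact fun h => hB.2.1 (List.mem_of_mem_tail h)
  · exact hB.2.2 s hs

theorem tileCount_play_cons_cons {g : G} {t₁ t₂ : List G} {rest : Board G}
    (hB : AllPlayable ((g :: t₁) ::ₘ (g :: t₂) ::ₘ rest) g) :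
    tileCount (play (g :: t₁) (g :: t₂) rest) g + 2 =
      tileCount ((g :: t₁) ::ₘ (g :: t₂) ::ₘ rest) g := by
  simp only [allPlayable_cons, List.tail_cons] at hB
  simp [_root_.play, tileCount_filter_ne_nil, tileCount_cons, List.count_eq_zero.mpr hB.1,
    List.count_eq_zero.mpr hB.2.1]
  omega

theorem clean_play_cons_cons {g : G} {t₁ t₂ : List G} {rest : Board G}
    (hB : AllPlayable ((g :: t₁) ::ₘ (g :: t₂) ::ₘ rest) g) :
    clean g (play (g :: t₁) (g :: t₂) rest) = clean g ((g :: t₁) ::ₘ (g :: t₂) ::ₘ rest) := by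
  simp only [allPlayable_cons, List.tail_cons] at hB
  rw [_root_.play, clean_filter_ne_nil]
  simp only [clean, Multiset.map_cons, List.tail_cons, cleanStack_cons_self,
    cleanStack_of_not_mem hB.1, cleanStack_of_not_mem hB.2.1]

theorem move_clean_play_of_ne {g h : G} {t₁ t₂ : List G} {rest : Board G} (hne : h ≠ g)
    (hB : AllPlayable ((h :: t₁) ::ₘ (h :: t₂) ::ₘ rest) g) :
    Move (clean g ((h :: t₁) ::ₘ (h :: t₂) ::ₘ rest)) (clean g (play (h :: t₁) (h :: t₂) rest)) := by
  simp only [allPlayable_cons, List.tail_cons] at hB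
  have hg₁ : g ∉ h :: t₁ := by simp [hne.symm, hB.1]
  have hg₂ : g ∉ h :: t₂ := by simp [hne.symm, hB.2.1]
  refine ⟨h, h :: t₁, h :: t₂, clean g rest, ?_, rfl, rfl, ?_⟩
  · simp [clean, cleanStack_of_not_mem hg₁, cleanStack_of_not_mem hg₂]
  · rw [_root_.play, clean_filter_ne_nil, clean, clean, play_filter_ne_nil]
    simp only [Multiset.map_cons, List.tail_cons, cleanStack_of_not_mem hB.1,
      cleanStack_of_not_mem hB.2.1, _root_.play]

theorem solvable_clean {B : Board G} {g : G} (hB : AllPlayable B g) (h : Solvable B) :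
    Solvable (clean g B) := by
  induction h using Relation.ReflTransGen.head_induction_on with
  | refl => exact .refl
  | head hmove _ ih =>
    obtain ⟨h, s₁, s₂, rest, rfl, h₁, h₂, rfl⟩ := hmove
    obtain ⟨t₁, rfl⟩ := List.head?_eq_some_iff.mp h₁
    obtain ⟨t₂, rfl⟩ := List.head?_eq_some_iff.mp h₂
    by_cases hh : h = g
    · subst hh
      rw [← clean_play_cons_cons hB]
      exact ih hB.play
    · exact .head (move_clean_play_of_ne hh hB) (ih hB.play)

theorem AllPlayable.exists_eq_cons {B : Board G} {g : G} (hB : AllPlayable B g)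
    (h : tileCount B g ≠ 0) : ∃ t rest, B = (g :: t) ::ₘ rest := by
  obtain ⟨s, hs, hgs⟩ : ∃ s ∈ B, g ∈ s := by simpa using mt tileCount_eq_zero.mpr h
  obtain ⟨t, rfl⟩ := List.head?_eq_some_iff.mp (s.head?_eq_some_of_mem_of_not_mem_tail hgs (hB s hs))
  obtain ⟨rest, rfl⟩ := Multiset.exists_cons_of_mem hs
  exact ⟨t, rest, rfl⟩

theorem AllPlayable.exists_eq_cons_cons {B : Board G} {g : G} (hB : AllPlayable B g)
    (h : 2 ≤ tileCount B g) : ∃ t₁ t₂ rest, B = (g :: t₁) ::ₘ (g :: t₂) ::ₘ rest := by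
  obtain ⟨t₁, B', rfl⟩ := hB.exists_eq_cons (by omega)
  obtain ⟨ht₁, hB'⟩ := allPlayable_cons.mp hB
  rw [tileCount_cons, List.count_cons_self, List.count_eq_zero.mpr (show g ∉ t₁ from ht₁)] at h
  obtain ⟨t₂, rest, rfl⟩ := hB'.exists_eq_cons (by omega)
  exact ⟨t₁, t₂, rest, rfl⟩

/-- The count must be positive: `clean` also drops empty stacks, which no move can remove from a
board without `g`-tiles. -/
theorem AllPlayable.reflTransGen_move_clean {B : Board G} {g : G} (hB : AllPlayable B g) {n : ℕ}
    (hn : tileCount B g = 2 * (n + 1)) : Relation.ReflTransGen Move B (clean g B) := by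
  obtain ⟨t₁, t₂, rest, rfl⟩ := hB.exists_eq_cons_cons (by omega)
  have hcount := tileCount_play_cons_cons hB
  rw [← clean_play_cons_cons hB]
  refine .head ⟨g, _, _, rest, rfl, rfl, rfl, rfl⟩ ?_
  match n with
  | 0 =>
    rw [clean_eq_filter_of_tileCount_eq_zero (by omega)]
    simpa [_root_.play] using .refl
  | n + 1 => exact hB.play.reflTransGen_move_clean (n := n) (by omega)

theorem solvable_iff_solvable_clean {B : Board G} {g : G} (hB : AllPlayable B g) {n : ℕ}
    (hn : tileCount B g = 2 * (n + 1)) : Solvable B ↔ Solvable (clean g B) :=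
  ⟨solvable_clean hB, (hB.reflTransGen_move_clean hn).trans⟩

end Board

/-- cleaning soundness: if all remaining tiles (two or four) of a
group `g` are simultaneously playable, then the board is solvable iff the board
obtained by removing all tiles of `g` is solvable. -/
theorem stmt13 (B : Board G) (g : G)
    (hcount : tileCount B g = 2 ∨ tileCount B g = 4)
    (hplay : ∀ s ∈ B, g ∈ s → s.head? = some g ∧ g ∉ s.tail) :
    Solvable B ↔ Solvable (Multiset.filter (fun s => s ≠ [])
      (B.map (fun s => if s.head? = some g then s.tail else s))) := by
  have hB : Board.AllPlayable B g := fun s hs hg => (hplay s hs (List.mem_of_mem_tail hg)).2 hg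
  obtain ⟨n, hn⟩ : ∃ n, tileCount B g = 2 * (n + 1) := hcount.elim (⟨0, ·⟩) (⟨1, ·⟩)
  exact Board.solvable_iff_solvable_clean hB hn
end

section
/- If on a board of isolated stacks of heights one and two (groups of size two or four, no blocked cycle) a group g has a match whose removal creates a new blocked cycle, then after that removal exactly one tile of g remains on the ground (i.e., as the bottom or sole tile of a stack). -/
variable {G : Type*} [DecidableEq G]

/-- The number of tiles of group `g` lying on the ground, i.e. at the bottom of
their stack. -/
def groundCount (B : Board G) (g : G) : ℕ :=
  (B.map (fun s => if s.getLast? = some g then 1 else 0)).sum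

/-!
The tails left by the move have height at most one, so every cycle stack of the new board
was already a stack of the old one, and a cycle avoiding `g` would already have been blocked
there. Hence `g` belongs to the new cycle; its two remaining tiles are then the bottom tile of
the stack `[p (i + 1), g]` and the top tile of `[g, p (i - 1)]` (one stack `[g, g]` when the
cycle has length one), so exactly one of them is on the ground.
-/

lemma tileCount_add (M N : Board G) (g : G) :
    tileCount (M + N) g = tileCount M g + tileCount N g := by
  simp [tileCount]

lemma groundCount_add (M N : Board G) (g : G) :
    groundCount (M + N) g = groundCount M g + groundCount N g := by
  simp [groundCount]

lemma groundCount_eq_zero_of_tileCount_eq_zero {M : Board G} {g : G}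
    (h : tileCount M g = 0) : groundCount M g = 0 := by
  simp only [tileCount, groundCount, Multiset.sum_eq_zero_iff, Multiset.mem_map,
    forall_exists_index, and_imp, forall_apply_eq_imp_iff₂, List.count_eq_zero] at h ⊢
  intro s hs
  simp only [ite_eq_right_iff, one_ne_zero, imp_false]
  exact fun hlast => h s hs (List.mem_of_getLast? hlast)

lemma groundCount_eq_of_le {S M : Board G} {g : G} (hS : S ≤ M)
    (h : tileCount M g = tileCount S g) : groundCount M g = groundCount S g := by
  obtain ⟨N, rfl⟩ := Multiset.le_iff_exists_add.mp hS
  rw [tileCount_add] at h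
  rw [groundCount_add, groundCount_eq_zero_of_tileCount_eq_zero (M := N) (by omega), add_zero]

lemma tileCount_filter_ne_nil_s18 (M : Board G) (g : G) :
    tileCount (M.filter (· ≠ [])) g = tileCount M g := by
  induction M using Multiset.induction with
  | empty => rfl
  | cons s M ih => by_cases hs : s = [] <;> simp [hs, tileCount] at ih ⊢ <;> exact ih

lemma tileCount_play_cons_of_ne {g x : G} (hx : x ≠ g) (t₁ t₂ : List G) (rest : Board G) :
    tileCount (play (g :: t₁) (g :: t₂) rest) x =
      tileCount ((g :: t₁) ::ₘ (g :: t₂) ::ₘ rest) x := by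
  rw [play, tileCount_filter_ne_nil_s18]
  simp [tileCount, hx.symm]

lemma mem_of_mem_play {s₁ s₂ s : List G} {rest : Board G} (h₁ : s₁.length ≤ 2)
    (h₂ : s₂.length ≤ 2) (hs : s ∈ play s₁ s₂ rest) (hlen : s.length = 2) : s ∈ rest := by
  obtain ⟨rfl | rfl | hs, -⟩ := by simpa [play] using hs
  · simp at hlen; omega
  · simp at hlen; omega
  · exact hs

namespace BlockedCycle

variable {M : Board G} {k : ℕ} {p : Fin (k + 1) → G}

lemma of_play {g : G} {t₁ t₂ : List G} {rest : Board G} (h₁ : (g :: t₁).length ≤ 2)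
    (h₂ : (g :: t₂).length ≤ 2) (hp : BlockedCycle (play (g :: t₁) (g :: t₂) rest) p)
    (hg : ∀ i, p i ≠ g) : BlockedCycle ((g :: t₁) ::ₘ (g :: t₂) ::ₘ rest) p := by
  obtain ⟨hinj, hcount, hstack⟩ := hp
  refine ⟨hinj, fun i => ?_, fun i => ?_⟩
  · rw [← tileCount_play_cons_of_ne (hg i)]
    exact hcount i
  · exact Multiset.mem_cons_of_mem <| Multiset.mem_cons_of_mem <|
      mem_of_mem_play h₁ h₂ (hstack i) rfl

lemma groundCount_eq_one (hp : BlockedCycle M p) (i : Fin (k + 1)) :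
    groundCount M (p i) = 1 := by
  obtain ⟨hinj, hcount, hstack⟩ := hp
  by_cases hloop : p (i + 1) = p i
  · have hle : {[p i, p i]} ≤ M := Multiset.singleton_le.mpr (hloop ▸ hstack i)
    rw [groundCount_eq_of_le hle (by rw [hcount i]; simp [tileCount])]
    simp [groundCount]
  · have hloop' : p (i - 1) ≠ p i := fun h => hloop <| congrArg p <|
      calc i + 1 = i - 1 + 1 := by rw [hinj h]
        _ = i := sub_add_cancel i 1
    have hle : {[p (i + 1), p i], [p i, p (i - 1)]} ≤ M := by
      rw [Multiset.le_iff_subset (by simp [hloop])]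
      simpa [Multiset.insert_eq_cons, Multiset.cons_subset] using
        ⟨hstack i, by simpa using hstack (i - 1)⟩
    rw [groundCount_eq_of_le hle (by rw [hcount i]; simp [tileCount, hloop, hloop'])]
    simp [groundCount, hloop']

end BlockedCycle

theorem stmt18_general (B : Board G) (hH : HeightsOK B)
    (hnc : ¬ HasBlockedCycle B) (g : G) (s₁ s₂ : List G) (rest : Board G)
    (hB : B = s₁ ::ₘ s₂ ::ₘ rest)
    (h1 : s₁.head? = some g) (h2 : s₂.head? = some g)
    (hcyc : HasBlockedCycle (play s₁ s₂ rest)) :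
    groundCount (play s₁ s₂ rest) g = 1 := by
  obtain ⟨t₁, rfl⟩ := List.head?_eq_some_iff.mp h1
  obtain ⟨t₂, rfl⟩ := List.head?_eq_some_iff.mp h2
  obtain ⟨k, p, hp⟩ := hcyc
  by_cases hg : ∃ i, p i = g
  · obtain ⟨i, rfl⟩ := hg
    exact hp.groundCount_eq_one i
  · subst hB
    exact absurd ⟨k, p, hp.of_play (hH _ (by simp)).2 (hH _ (by simp)).2 fun i hi => hg ⟨i, hi⟩⟩
      hnc

/-- if playing a match of group `g` on a cycle-free board (stacks
of heights one and two, groups of size two or four) creates a blocked cycle,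
then after that removal exactly one tile of `g` remains on the ground. -/
theorem stmt18 (B : Board G) (hH : HeightsOK B)
    (hs : ∀ g : G, tileCount B g = 0 ∨ tileCount B g = 2 ∨ tileCount B g = 4)
    (hnc : ¬ HasBlockedCycle B) (g : G) (s₁ s₂ : List G) (rest : Board G)
    (hB : B = s₁ ::ₘ s₂ ::ₘ rest)
    (h1 : s₁.head? = some g) (h2 : s₂.head? = some g)
    (hcyc : HasBlockedCycle (play s₁ s₂ rest)) :
    groundCount (play s₁ s₂ rest) g = 1 :=
  stmt18_general B hH hnc g s₁ s₂ rest hB h1 h2 hcyc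
end
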